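/- There exists K < ∞ such that whenever x, y ∈ 𝔤_CM satisfy d(x,y) < 1/(2·C(ω)) (with the convention 1/0 = ∞), one has ‖y − x‖ ≤ K (1 + min(‖x‖, ‖y‖)) d(x,y). Consequently, the topology on 𝔤_CM induced by the distance d coincides with the norm topology of 𝔤_CM. -/

import Mathlib

open MeasureTheory
open scoped ENNReal

/-- The Hilbert norm `‖(A,a)‖ = √(‖A‖² + ‖a‖²)` on `𝔤_CM = H × 𝐂`. -/
noncomputable def gNorm {H C : Type*} [NormedAddCommGroup H] [NormedAddCommGroup C]
    (p : H × C) : ℝ :=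
  Real.sqrt (‖p.1‖ ^ 2 + ‖p.2‖ ^ 2)

/-- The length of the `C¹` path `s ↦ (w s, c s)`, `0 ≤ s ≤ 1`, with respect to the
left invariant Riemannian metric on the Heisenberg type group determined by `ω`. -/
noncomputable def pathLen {H C : Type*} [NormedAddCommGroup H] [InnerProductSpace ℝ H]
    [NormedAddCommGroup C] [InnerProductSpace ℝ C]
    (ω : H →L[ℝ] H →L[ℝ] C) (w : ℝ → H) (c : ℝ → C) : ℝ :=
  ∫ s in (0:ℝ)..1,
    Real.sqrt (‖deriv w s‖ ^ 2 + ‖deriv c s - (2:ℝ)⁻¹ • ω (w s) (deriv w s)‖ ^ 2)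

/-- The left invariant Riemannian distance on `𝔤_CM = H × 𝐂`. -/
noncomputable def dCM {H C : Type*} [NormedAddCommGroup H] [InnerProductSpace ℝ H]
    [NormedAddCommGroup C] [InnerProductSpace ℝ C]
    (ω : H →L[ℝ] H →L[ℝ] C) (x y : H × C) : ℝ :=
  sInf {L : ℝ | ∃ w : ℝ → H, ∃ c : ℝ → C, ContDiff ℝ 1 w ∧ ContDiff ℝ 1 c ∧
    w 0 = x.1 ∧ c 0 = x.2 ∧ w 1 = y.1 ∧ c 1 = y.2 ∧ L = pathLen ω w c}

/-!
Along a `C¹` path `(w, c)` of length `ℓ`, `w` moves by at most `ℓ` and `c` by at most `ℓ` plus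
the correction `½ ∫ ω(w, w')`. Freezing the base point at `w t` splits the correction into
`½ ω(w t, w 1 - w 0)`, of size `‖ω‖ ‖w t‖ ℓ`, and `½ ∫ ω(w - w t, w')`, of size `‖ω‖ ℓ²`, which
is at most `ℓ` while `‖ω‖ ℓ ≤ 1`. Taking for `t` the endpoint of smaller norm and then the
infimum over paths gives the bound. Conversely the straight segment from `x` to `y` has length
`O(‖y - x‖)` for fixed `x`, so the two topologies have the same neighbourhoods.
-/

open Set

section GNorm

variable {H C : Type*} [NormedAddCommGroup H] [NormedAddCommGroup C]

lemma gNorm_nonneg (p : H × C) : 0 ≤ gNorm p := Real.sqrt_nonneg _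

lemma norm_fst_le_gNorm (p : H × C) : ‖p.1‖ ≤ gNorm p :=
  Real.le_sqrt_of_sq_le (le_add_of_nonneg_right (sq_nonneg _))

lemma norm_snd_le_gNorm (p : H × C) : ‖p.2‖ ≤ gNorm p :=
  Real.le_sqrt_of_sq_le (le_add_of_nonneg_left (sq_nonneg _))

lemma gNorm_le_norm_fst_add_norm_snd (p : H × C) : gNorm p ≤ ‖p.1‖ + ‖p.2‖ :=
  Real.sqrt_le_iff.2 ⟨by positivity, by nlinarith [norm_nonneg p.1, norm_nonneg p.2]⟩

lemma continuous_gNorm : Continuous (gNorm : H × C → ℝ) := by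
  unfold gNorm; fun_prop

end GNorm

lemma norm_sub_le_integral_norm_deriv {E : Type*} [NormedAddCommGroup E] [NormedSpace ℝ E]
    {f : ℝ → E} (hf : ContDiff ℝ 1 f) {a b s t : ℝ} (hs : s ∈ Icc a b) (ht : t ∈ Icc a b) :
    ‖f s - f t‖ ≤ ∫ u in a..b, ‖deriv f u‖ := by
  wlog hts : t ≤ s generalizing s t
  · rw [norm_sub_rev]; exact this ht hs (le_of_not_ge hts)
  have hdf : Continuous fun u => ‖deriv f u‖ := (hf.continuous_deriv le_rfl).norm
  calc ‖f s - f t‖ ≤ ∫ u in t..s, ‖deriv f u‖ :=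
        norm_sub_le_integral_of_norm_deriv_le_of_le hts hf.continuous.continuousOn
          (hf.differentiable one_ne_zero).differentiableOn (ae_of_all _ fun _ _ => le_rfl)
          (hdf.intervalIntegrable _ _)
    _ ≤ ∫ u in a..b, ‖deriv f u‖ :=
        intervalIntegral.integral_mono_interval ht.1 hts hs.2
          (ae_of_all _ fun _ => norm_nonneg _) (hdf.intervalIntegrable _ _)

lemma le_mul_csInf_of_forall_lt {S : Set ℝ} (hS : S.Nonempty) {a b k : ℝ} (hk : 0 ≤ k)
    (hb : sInf S < b) (h : ∀ L ∈ S, L < b → a ≤ k * L) : a ≤ k * sInf S := by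
  refine le_of_forall_pos_lt_add fun ε hε => ?_
  have hδ : 0 < ε / (k + 1) := by positivity
  obtain ⟨L, hLS, hL⟩ := exists_lt_of_csInf_lt hS (lt_min hb (lt_add_of_pos_right _ hδ))
  have hkδ : k * (ε / (k + 1)) < ε := by
    rw [mul_div_assoc', div_lt_iff₀ (by positivity)]; nlinarith
  calc a ≤ k * L := h L hLS (hL.trans_le (min_le_left _ _))
    _ ≤ k * (sInf S + ε / (k + 1)) := by gcongr; exact hL.le.trans (min_le_right _ _)
    _ < k * sInf S + ε := by rw [mul_add]; linarith

lemma exists_lt_mul_le_one_of_ofReal_lt_inv {r c : ℝ} (hc : 0 ≤ c)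
    (h : ENNReal.ofReal r < (ENNReal.ofReal (2 * c))⁻¹) : ∃ b, r < b ∧ c * b ≤ 1 := by
  rcases hc.eq_or_lt with rfl | hc
  · exact ⟨r + 1, by linarith, by simp⟩
  · rw [← ENNReal.ofReal_inv_of_pos (by positivity),
      ENNReal.ofReal_lt_ofReal_iff (by positivity)] at h
    refine ⟨(2 * c)⁻¹, h, ?_⟩
    rw [mul_inv, ← mul_assoc, mul_comm c, mul_assoc, mul_inv_cancel₀ hc.ne']
    norm_num

section Paths

variable {H C : Type*} [NormedAddCommGroup H] [InnerProductSpace ℝ H]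
    [NormedAddCommGroup C] [InnerProductSpace ℝ C]
    (ω : H →L[ℝ] H →L[ℝ] C) {w : ℝ → H} {c : ℝ → C}

/-- The `𝐂`-component of the left-trivialized velocity `g(s)⁻¹ g'(s)` of the path `g = (w, c)`. -/
noncomputable def verticalVelocity (w : ℝ → H) (c : ℝ → C) (s : ℝ) : C :=
  deriv c s - (2:ℝ)⁻¹ • ω (w s) (deriv w s)

lemma pathLen_eq_integral_gNorm (w : ℝ → H) (c : ℝ → C) :
    pathLen ω w c = ∫ s in (0:ℝ)..1, gNorm (deriv w s, verticalVelocity ω w c s) :=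
  rfl

lemma pathLen_nonneg (w : ℝ → H) (c : ℝ → C) : 0 ≤ pathLen ω w c :=
  intervalIntegral.integral_nonneg zero_le_one fun _ _ => Real.sqrt_nonneg _

lemma continuous_verticalVelocity (hw : ContDiff ℝ 1 w) (hc : ContDiff ℝ 1 c) :
    Continuous (verticalVelocity ω w c) :=
  (hc.continuous_deriv le_rfl).sub
    ((ω.continuous₂.comp (hw.continuous.prodMk (hw.continuous_deriv le_rfl))).const_smul _)

lemma intervalIntegrable_gNorm_velocity (hw : ContDiff ℝ 1 w) (hc : ContDiff ℝ 1 c) (a b : ℝ) :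
    IntervalIntegrable (fun s => gNorm (deriv w s, verticalVelocity ω w c s)) volume a b :=
  (continuous_gNorm.comp ((hw.continuous_deriv le_rfl).prodMk
    (continuous_verticalVelocity ω hw hc))).intervalIntegrable _ _

lemma integral_norm_deriv_le_pathLen (hw : ContDiff ℝ 1 w) (hc : ContDiff ℝ 1 c) :
    ∫ s in (0:ℝ)..1, ‖deriv w s‖ ≤ pathLen ω w c := by
  rw [pathLen_eq_integral_gNorm]
  exact intervalIntegral.integral_mono_on zero_le_one
    ((hw.continuous_deriv le_rfl).norm.intervalIntegrable _ _)
    (intervalIntegrable_gNorm_velocity ω hw hc _ _) fun s _ => norm_fst_le_gNorm (deriv w s, _)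

lemma integral_norm_verticalVelocity_le_pathLen (hw : ContDiff ℝ 1 w) (hc : ContDiff ℝ 1 c) :
    ∫ s in (0:ℝ)..1, ‖verticalVelocity ω w c s‖ ≤ pathLen ω w c := by
  rw [pathLen_eq_integral_gNorm]
  exact intervalIntegral.integral_mono_on zero_le_one
    ((continuous_verticalVelocity ω hw hc).norm.intervalIntegrable _ _)
    (intervalIntegrable_gNorm_velocity ω hw hc _ _) fun s _ => norm_snd_le_gNorm (deriv w s, _)

lemma norm_fst_sub_le_pathLen (hw : ContDiff ℝ 1 w) (hc : ContDiff ℝ 1 c) :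
    ‖w 1 - w 0‖ ≤ pathLen ω w c :=
  (norm_sub_le_integral_norm_deriv hw (right_mem_Icc.2 zero_le_one)
    (left_mem_Icc.2 zero_le_one)).trans (integral_norm_deriv_le_pathLen ω hw hc)

lemma norm_snd_sub_le_pathLen (hw : ContDiff ℝ 1 w) (hc : ContDiff ℝ 1 c) {t : ℝ}
    (ht : t ∈ Icc (0:ℝ) 1) :
    ‖c 1 - c 0‖ ≤ pathLen ω w c + 2⁻¹ * ‖ω‖ * pathLen ω w c ^ 2
      + 2⁻¹ * ‖ω‖ * ‖w t‖ * pathLen ω w c := by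
  set ℓ := pathLen ω w c
  set A := ∫ s in (0:ℝ)..1, ‖deriv w s‖
  set V := verticalVelocity ω w c
  have hA : A ≤ ℓ := integral_norm_deriv_le_pathLen ω hw hc
  have hA0 : 0 ≤ A := intervalIntegral.integral_nonneg zero_le_one fun _ _ => norm_nonneg _
  have hV : ∫ s in (0:ℝ)..1, ‖V s‖ ≤ ℓ := integral_norm_verticalVelocity_le_pathLen ω hw hc
  have hΔw : ‖w 1 - w 0‖ ≤ ℓ := norm_fst_sub_le_pathLen ω hw hc
  have hdw := hw.continuous_deriv le_rfl
  have hVc : Continuous fun s => ‖V s‖ := (continuous_verticalVelocity ω hw hc).norm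
  set ψ := fun s => c s - (2:ℝ)⁻¹ • ω (w t) (w s)
  have hψ : ∀ s, HasDerivAt ψ (V s + (2:ℝ)⁻¹ • ω (w s - w t) (deriv w s)) s := by
    intro s
    convert ((hc.differentiable one_ne_zero s).hasDerivAt).sub
      (((ω (w t)).hasFDerivAt.comp_hasDerivAt s
        (hw.differentiable one_ne_zero s).hasDerivAt).const_smul (2:ℝ)⁻¹) using 1
    · rfl
    · simp only [V, verticalVelocity, map_sub, sub_apply, smul_sub]
      abel
  have hψ' : ∀ s ∈ Ioo (0:ℝ) 1, ‖deriv ψ s‖ ≤ ‖V s‖ + 2⁻¹ * ‖ω‖ * A * ‖deriv w s‖ := by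
    intro s hs
    rw [(hψ s).deriv]
    calc ‖V s + (2:ℝ)⁻¹ • ω (w s - w t) (deriv w s)‖
        ≤ ‖V s‖ + 2⁻¹ * ‖ω‖ * ‖w s - w t‖ * ‖deriv w s‖ := by
          grw [norm_add_le, norm_smul, ω.le_opNorm₂]; norm_num [mul_assoc]
      _ ≤ ‖V s‖ + 2⁻¹ * ‖ω‖ * A * ‖deriv w s‖ := by
          gcongr; exact norm_sub_le_integral_norm_deriv hw (Ioo_subset_Icc_self hs) ht
  have hψ01 : ‖ψ 1 - ψ 0‖ ≤ ℓ + 2⁻¹ * ‖ω‖ * ℓ ^ 2 :=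
    calc ‖ψ 1 - ψ 0‖ ≤ ∫ s in (0:ℝ)..1, (‖V s‖ + 2⁻¹ * ‖ω‖ * A * ‖deriv w s‖) :=
          norm_sub_le_integral_of_norm_deriv_le_of_le zero_le_one
            (fun s _ => (hψ s).continuousAt.continuousWithinAt)
            (fun s _ => (hψ s).differentiableAt.differentiableWithinAt)
            (ae_of_all _ hψ') ((hVc.add (continuous_const.mul hdw.norm)).intervalIntegrable _ _)
      _ = (∫ s in (0:ℝ)..1, ‖V s‖) + 2⁻¹ * ‖ω‖ * A * A := by
          rw [intervalIntegral.integral_add (f := fun s => ‖V s‖)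
            (g := fun s => 2⁻¹ * ‖ω‖ * A * ‖deriv w s‖) (hVc.intervalIntegrable _ _)
            ((continuous_const.mul hdw.norm).intervalIntegrable _ _),
            intervalIntegral.integral_const_mul]
      _ ≤ ℓ + 2⁻¹ * ‖ω‖ * ℓ ^ 2 := by
          have hAA : ‖ω‖ * (A * A) ≤ ‖ω‖ * ℓ ^ 2 := by
            rw [sq]; gcongr; exact hA0.trans hA
          linarith
  calc ‖c 1 - c 0‖ = ‖(ψ 1 - ψ 0) + (2:ℝ)⁻¹ • ω (w t) (w 1 - w 0)‖ := by
        simp only [ψ, map_sub, smul_sub]; abel_nf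
    _ ≤ ℓ + 2⁻¹ * ‖ω‖ * ℓ ^ 2 + 2⁻¹ * (‖ω‖ * ‖w t‖ * ℓ) := by
        grw [norm_add_le, hψ01, norm_smul, ω.le_opNorm₂, hΔw]
        norm_num
    _ = _ := by ring

end Paths

section Distance

variable {H C : Type*} [NormedAddCommGroup H] [InnerProductSpace ℝ H]
    [NormedAddCommGroup C] [InnerProductSpace ℝ C] (ω : H →L[ℝ] H →L[ℝ] C)

def admissibleLengths (x y : H × C) : Set ℝ :=
  {L : ℝ | ∃ w : ℝ → H, ∃ c : ℝ → C, ContDiff ℝ 1 w ∧ ContDiff ℝ 1 c ∧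
    w 0 = x.1 ∧ c 0 = x.2 ∧ w 1 = y.1 ∧ c 1 = y.2 ∧ L = pathLen ω w c}

lemma dCM_eq_sInf_admissibleLengths (x y : H × C) :
    dCM ω x y = sInf (admissibleLengths ω x y) :=
  rfl

lemma nonneg_of_mem_admissibleLengths {x y : H × C} {L : ℝ}
    (hL : L ∈ admissibleLengths ω x y) : 0 ≤ L := by
  obtain ⟨w, c, -, -, -, -, -, -, rfl⟩ := hL
  exact pathLen_nonneg ω w c

lemma dCM_nonneg (x y : H × C) : 0 ≤ dCM ω x y := by
  rw [dCM_eq_sInf_admissibleLengths]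
  exact Real.sInf_nonneg fun _ => nonneg_of_mem_admissibleLengths ω

lemma deriv_const_add_smul {E : Type*} [NormedAddCommGroup E] [NormedSpace ℝ E] (p v : E) :
    deriv (fun s : ℝ => p + s • v) = fun _ => v := by
  funext s
  exact (((hasDerivAt_id s).smul_const v).const_add p).deriv.trans (one_smul ℝ v)

lemma pathLen_segment_mem_admissibleLengths (x y : H × C) :
    pathLen ω (fun s => x.1 + s • (y.1 - x.1)) (fun s => x.2 + s • (y.2 - x.2)) ∈
      admissibleLengths ω x y :=
  ⟨_, _, by fun_prop, by fun_prop, by simp, by simp, by simp, by simp, rfl⟩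

lemma pathLen_segment_le (x y : H × C) :
    pathLen ω (fun s => x.1 + s • (y.1 - x.1)) (fun s => x.2 + s • (y.2 - x.2)) ≤
      (2 + ‖ω‖ * (gNorm x + gNorm (y - x))) * gNorm (y - x) := by
  have hv : ‖y.1 - x.1‖ ≤ gNorm (y - x) := norm_fst_le_gNorm (y - x)
  have hu : ‖y.2 - x.2‖ ≤ gNorm (y - x) := norm_snd_le_gNorm (y - x)
  have hx : ‖x.1‖ ≤ gNorm x := norm_fst_le_gNorm x
  have hbound : ∀ s ∈ uIoc (0:ℝ) 1,
      ‖gNorm (y.1 - x.1, y.2 - x.2 - (2:ℝ)⁻¹ • ω (x.1 + s • (y.1 - x.1)) (y.1 - x.1))‖ ≤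
        (2 + ‖ω‖ * (gNorm x + gNorm (y - x))) * gNorm (y - x) := by
    intro s hs
    rw [uIoc_of_le zero_le_one] at hs
    have hxs : ‖x.1 + s • (y.1 - x.1)‖ ≤ ‖x.1‖ + ‖y.1 - x.1‖ := by
      grw [norm_add_le, norm_smul, Real.norm_of_nonneg hs.1.le, hs.2, one_mul]
    have hω : ‖(2:ℝ)⁻¹ • ω (x.1 + s • (y.1 - x.1)) (y.1 - x.1)‖ ≤
        ‖ω‖ * (‖x.1‖ + ‖y.1 - x.1‖) * ‖y.1 - x.1‖ := by
      rw [norm_smul]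
      calc _ ≤ 1 * (‖ω‖ * ‖x.1 + s • (y.1 - x.1)‖ * ‖y.1 - x.1‖) := by
            gcongr
            · norm_num
            · exact ω.le_opNorm₂ _ _
        _ ≤ _ := by rw [one_mul]; gcongr
    rw [Real.norm_of_nonneg (gNorm_nonneg _)]
    calc _ ≤ ‖y.1 - x.1‖ + ‖y.2 - x.2 - (2:ℝ)⁻¹ • ω (x.1 + s • (y.1 - x.1)) (y.1 - x.1)‖ :=
          gNorm_le_norm_fst_add_norm_snd _
      _ ≤ ‖y.1 - x.1‖ + (‖y.2 - x.2‖ + ‖ω‖ * (‖x.1‖ + ‖y.1 - x.1‖) * ‖y.1 - x.1‖) := by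
          linarith [norm_sub_le (y.2 - x.2) ((2:ℝ)⁻¹ • ω (x.1 + s • (y.1 - x.1)) (y.1 - x.1))]
      _ ≤ gNorm (y - x) + (gNorm (y - x) + ‖ω‖ * (gNorm x + gNorm (y - x)) * gNorm (y - x)) := by
          have := add_nonneg (gNorm_nonneg x) (gNorm_nonneg (y - x))
          gcongr
      _ = _ := by ring
  simp only [pathLen_eq_integral_gNorm, verticalVelocity, deriv_const_add_smul]
  calc _ ≤ ‖∫ s in (0:ℝ)..1,
          gNorm (y.1 - x.1, y.2 - x.2 - (2:ℝ)⁻¹ • ω (x.1 + s • (y.1 - x.1)) (y.1 - x.1))‖ :=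
        Real.le_norm_self _
    _ ≤ (2 + ‖ω‖ * (gNorm x + gNorm (y - x))) * gNorm (y - x) * |1 - 0| :=
        intervalIntegral.norm_integral_le_of_norm_le_const hbound
    _ = _ := by simp

lemma dCM_le (x y : H × C) :
    dCM ω x y ≤ (2 + ‖ω‖ * (gNorm x + gNorm (y - x))) * gNorm (y - x) := by
  rw [dCM_eq_sInf_admissibleLengths]
  exact (csInf_le ⟨0, fun _ => nonneg_of_mem_admissibleLengths ω⟩
    (pathLen_segment_mem_admissibleLengths ω x y)).trans (pathLen_segment_le ω x y)

lemma gNorm_sub_le_pathLen {x y : H × C} {w : ℝ → H} {c : ℝ → C}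
    (hw : ContDiff ℝ 1 w) (hc : ContDiff ℝ 1 c) (hw0 : w 0 = x.1) (hc0 : c 0 = x.2)
    (hw1 : w 1 = y.1) (hc1 : c 1 = y.2) (hℓ : ‖ω‖ * pathLen ω w c ≤ 1) :
    gNorm (y - x) ≤ (3 + ‖ω‖) * (1 + min (gNorm x) (gNorm y)) * pathLen ω w c := by
  set ℓ := pathLen ω w c
  set m := min (gNorm x) (gNorm y)
  obtain ⟨t, ht, hwt⟩ : ∃ t ∈ Icc (0:ℝ) 1, ‖w t‖ ≤ m := by
    rcases le_total (gNorm x) (gNorm y) with hxy | hyx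
    · exact ⟨0, left_mem_Icc.2 zero_le_one,
        hw0 ▸ (norm_fst_le_gNorm x).trans_eq (min_eq_left hxy).symm⟩
    · exact ⟨1, right_mem_Icc.2 zero_le_one,
        hw1 ▸ (norm_fst_le_gNorm y).trans_eq (min_eq_right hyx).symm⟩
  have hℓ0 : 0 ≤ ℓ := pathLen_nonneg ω w c
  have hm0 : 0 ≤ m := le_min (gNorm_nonneg x) (gNorm_nonneg y)
  have hΔw := norm_fst_sub_le_pathLen ω hw hc
  have hΔc := norm_snd_sub_le_pathLen ω hw hc ht
  rw [hw0, hw1] at hΔw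
  rw [hc0, hc1] at hΔc
  have hsq : ‖ω‖ * ℓ ^ 2 ≤ ℓ := by nlinarith
  have hwtℓ : ‖ω‖ * ‖w t‖ * ℓ ≤ ‖ω‖ * m * ℓ := by gcongr
  calc gNorm (y - x) ≤ ‖y.1 - x.1‖ + ‖y.2 - x.2‖ := gNorm_le_norm_fst_add_norm_snd _
    _ ≤ (3 + ‖ω‖) * (1 + m) * ℓ := by
        nlinarith [mul_nonneg hm0 hℓ0, mul_nonneg (norm_nonneg ω) hℓ0,
          mul_nonneg (mul_nonneg (norm_nonneg ω) hm0) hℓ0]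

lemma gNorm_sub_le_mul_dCM {x y : H × C} {b : ℝ} (hb : ‖ω‖ * b ≤ 1) (hd : dCM ω x y < b) :
    gNorm (y - x) ≤ (3 + ‖ω‖) * (1 + min (gNorm x) (gNorm y)) * dCM ω x y := by
  rw [dCM_eq_sInf_admissibleLengths] at hd ⊢
  refine le_mul_csInf_of_forall_lt (b := b) ⟨_, pathLen_segment_mem_admissibleLengths ω x y⟩
    (by positivity [le_min (gNorm_nonneg x) (gNorm_nonneg y)]) hd ?_
  rintro _ ⟨w, c, hw, hc, hw0, hc0, hw1, hc1, rfl⟩ hℓb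
  exact gNorm_sub_le_pathLen ω hw hc hw0 hc0 hw1 hc1
    ((mul_le_mul_of_nonneg_left hℓb.le (norm_nonneg ω)).trans hb)

end Distance

section Topology

variable {H C : Type*} [NormedAddCommGroup H] [InnerProductSpace ℝ H]
    [NormedAddCommGroup C] [InnerProductSpace ℝ C] (ω : H →L[ℝ] H →L[ℝ] C)

lemma exists_pos_forall_gNorm_sub_lt_imp_dCM_lt (x : H × C) {ε : ℝ} (hε : 0 < ε) :
    ∃ δ > 0, ∀ y, gNorm (y - x) < δ → dCM ω x y < ε := by
  have hf : ContinuousAt (fun r : ℝ => (2 + ‖ω‖ * (gNorm x + r)) * r) 0 := by fun_prop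
  obtain ⟨δ, hδ, h⟩ := Metric.continuousAt_iff.1 hf ε hε
  refine ⟨δ, hδ, fun y hy => (dCM_le ω x y).trans_lt ?_⟩
  have hr : dist (gNorm (y - x)) 0 < δ := by
    rwa [Real.dist_0_eq_abs, abs_of_nonneg (gNorm_nonneg _)]
  simpa using (le_abs_self _).trans_lt (h hr)

lemma exists_pos_forall_dCM_lt_imp_gNorm_sub_lt (x : H × C) {ε : ℝ} (hε : 0 < ε) :
    ∃ δ > 0, ∀ y, dCM ω x y < δ → gNorm (y - x) < ε := by
  have hK : 0 < (3 + ‖ω‖) * (1 + gNorm x) := by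
    have := gNorm_nonneg x
    positivity
  have hb : ‖ω‖ * (1 + ‖ω‖)⁻¹ ≤ 1 := by
    rw [← div_eq_mul_inv, div_le_one (by positivity)]
    linarith
  refine ⟨min (1 + ‖ω‖)⁻¹ (ε / ((3 + ‖ω‖) * (1 + gNorm x))), by positivity, fun y hy => ?_⟩
  calc gNorm (y - x) ≤ (3 + ‖ω‖) * (1 + min (gNorm x) (gNorm y)) * dCM ω x y :=
        gNorm_sub_le_mul_dCM ω hb (hy.trans_le (min_le_left _ _))
    _ ≤ (3 + ‖ω‖) * (1 + gNorm x) * dCM ω x y := by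
        have := dCM_nonneg ω x y
        gcongr
        exact min_le_left _ _
    _ < (3 + ‖ω‖) * (1 + gNorm x) * (ε / ((3 + ‖ω‖) * (1 + gNorm x))) := by
        gcongr
        exact hy.trans_le (min_le_right _ _)
    _ = ε := mul_div_cancel₀ _ hK.ne'

end Topology

theorem norm_le_dist_bound_and_topologies_agree_general
    {H C : Type*} [NormedAddCommGroup H] [InnerProductSpace ℝ H]
    [NormedAddCommGroup C] [InnerProductSpace ℝ C]
    (ω : H →L[ℝ] H →L[ℝ] C) :
    (∃ K : ℝ, ∀ x y : H × C,
      ENNReal.ofReal (dCM ω x y) < (ENNReal.ofReal (2 * ‖ω‖))⁻¹ →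
        gNorm (y - x) ≤ K * (1 + min (gNorm x) (gNorm y)) * dCM ω x y) ∧
    (∀ x : H × C, ∀ ε : ℝ, 0 < ε → ∃ δ : ℝ, 0 < δ ∧
      (∀ y : H × C, gNorm (y - x) < δ → dCM ω x y < ε) ∧
      (∀ y : H × C, dCM ω x y < δ → gNorm (y - x) < ε)) := by
  refine ⟨⟨3 + ‖ω‖, fun x y hd => ?_⟩, fun x ε hε => ?_⟩
  · obtain ⟨b, hdb, hb⟩ := exists_lt_mul_le_one_of_ofReal_lt_inv (norm_nonneg ω) hd
    exact gNorm_sub_le_mul_dCM ω hb hdb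
  · obtain ⟨δ₁, hδ₁, h₁⟩ := exists_pos_forall_gNorm_sub_lt_imp_dCM_lt ω x hε
    obtain ⟨δ₂, hδ₂, h₂⟩ := exists_pos_forall_dCM_lt_imp_gNorm_sub_lt ω x hε
    exact ⟨min δ₁ δ₂, lt_min hδ₁ hδ₂, fun y hy => h₁ y (hy.trans_le (min_le_left _ _)),
      fun y hy => h₂ y (hy.trans_le (min_le_right _ _))⟩

/-- There exists `K < ∞` such that whenever `d(x,y) < 1/(2 C(ω))` (with `1/0 = ∞`),
`‖y − x‖ ≤ K (1 + min(‖x‖,‖y‖)) d(x,y)`.  Consequently the topology on `𝔤_CM` induced by `d`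
coincides with the norm topology. -/
theorem norm_le_dist_bound_and_topologies_agree
    {H C : Type*} [NormedAddCommGroup H] [InnerProductSpace ℝ H]
    [TopologicalSpace.SeparableSpace H]
    [NormedAddCommGroup C] [InnerProductSpace ℝ C] [FiniteDimensional ℝ C]
    (ω : H →L[ℝ] H →L[ℝ] C)
    (hskew : ∀ A B : H, ω A B = - ω B A) :
    (∃ K : ℝ, ∀ x y : H × C,
      ENNReal.ofReal (dCM ω x y) < (ENNReal.ofReal (2 * ‖ω‖))⁻¹ →
        gNorm (y - x) ≤ K * (1 + min (gNorm x) (gNorm y)) * dCM ω x y) ∧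
    (∀ x : H × C, ∀ ε : ℝ, 0 < ε → ∃ δ : ℝ, 0 < δ ∧
      (∀ y : H × C, gNorm (y - x) < δ → dCM ω x y < ε) ∧
      (∀ y : H × C, dCM ω x y < δ → gNorm (y - x) < ε)) :=
  norm_le_dist_bound_and_topologies_agree_general ω
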